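/- Define A(τ) = (1-sτ)^ε · (1 - τ(1+ε(1-s)))/(1+ε) for ε > 0, s ∈ (0,1]. Then A''(τ) > 0 if and only if τ < (2-s)/(s(1+(1-s)ε)). Moreover, the revenue-efficiency bound 1/(s(1+ε)) is strictly less than (2-s)/(s(1+(1-s)ε)), so A''(τ) > 0 at every revenue-efficient tax rate τ ≤ 1/(s(1+ε)). -/

import Mathlib

/-!
Write `A(τ) = g(τ) / (1 + ε)` with `g(τ) = (1 - sτ)^ε (1 - kτ)` and `k = 1 + ε(1 - s)`.
Differentiating twice gives `g''(τ) = ε s (1 - sτ)^(ε-2) ((ε - 1) s (1 - kτ) + 2k (1 - sτ))`,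
and the bracket collapses to `(1 + ε)((2 - s) - s k τ)`. Hence the sign of `A''` on `sτ < 1`
is that of the affine factor `(2 - s) - s k τ`, which vanishes exactly at
`(2 - s)/(s k)`. Comparing this threshold with the revenue-efficiency bound reduces to
`0 < 1 - s + ε`.
-/

open Filter Topology

section OneSubMulRpow

variable {s k p τ : ℝ}

theorem hasDerivAt_one_sub_mul_const (k τ : ℝ) : HasDerivAt (fun t => 1 - t * k) (-k) τ := by
  simpa using ((hasDerivAt_id τ).mul_const k).const_sub 1

theorem hasDerivAt_one_sub_mul_rpow (p : ℝ) (hτ : s * τ < 1) :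
    HasDerivAt (fun t => (1 - s * t) ^ p) (-(p * s * (1 - s * τ) ^ (p - 1))) τ := by
  have hlin : HasDerivAt (fun t => 1 - s * t) (-s) τ := by
    simpa [mul_comm] using hasDerivAt_one_sub_mul_const s τ
  exact (hlin.rpow_const (p := p) (Or.inl (by linarith))).congr_deriv (by ring)

theorem hasDerivAt_one_sub_mul_rpow_mul (hτ : s * τ < 1) :
    HasDerivAt (fun t => (1 - s * t) ^ p * (1 - t * k))
      (-(p * s * (1 - s * τ) ^ (p - 1) * (1 - τ * k)) - k * (1 - s * τ) ^ p) τ :=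
  ((hasDerivAt_one_sub_mul_rpow p hτ).mul (hasDerivAt_one_sub_mul_const k τ)).congr_deriv
    (by ring)

theorem deriv_deriv_one_sub_mul_rpow_mul (hτ : s * τ < 1) :
    deriv (deriv fun t => (1 - s * t) ^ p * (1 - t * k)) τ =
      p * s * (1 - s * τ) ^ (p - 2) * ((p - 1) * s * (1 - τ * k) + 2 * k * (1 - s * τ)) := by
  have hderiv : deriv (fun t => (1 - s * t) ^ p * (1 - t * k)) =ᶠ[𝓝 τ]
      fun t => -(p * s * (1 - s * t) ^ (p - 1) * (1 - t * k)) - k * (1 - s * t) ^ p := by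
    have hopen : IsOpen {t : ℝ | s * t < 1} := isOpen_lt (by fun_prop) continuous_const
    filter_upwards [hopen.mem_nhds hτ] with t ht
    exact hasDerivAt_one_sub_mul_rpow_mul ht |>.deriv
  have hu : 1 - s * τ ≠ 0 := by linarith
  have hpow₁ : (1 - s * τ) ^ (p - 1) = (1 - s * τ) ^ (p - 2) * (1 - s * τ) := by
    rw [← Real.rpow_add_one hu]; ring_nf
  have hpow₂ : (1 - s * τ) ^ (p - 1 - 1) = (1 - s * τ) ^ (p - 2) := by ring_nf
  have hsecond : HasDerivAt
      (fun t => -(p * s * (1 - s * t) ^ (p - 1) * (1 - t * k)) - k * (1 - s * t) ^ p)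
      (p * s * (1 - s * τ) ^ (p - 2) * ((p - 1) * s * (1 - τ * k) + 2 * k * (1 - s * τ)))
      τ := by
    refine ((((hasDerivAt_one_sub_mul_rpow (p - 1) hτ).const_mul (p * s)).mul
      (hasDerivAt_one_sub_mul_const k τ)).neg.sub
        ((hasDerivAt_one_sub_mul_rpow p hτ).const_mul k)).congr_deriv ?_
    rw [hpow₁, hpow₂]
    ring
  rw [hderiv.deriv_eq, hsecond.deriv]

end OneSubMulRpow

noncomputable def consumptionCoeff (ε s τ : ℝ) : ℝ :=
  (1 - s * τ) ^ ε * (1 - τ * (1 + ε * (1 - s))) / (1 + ε)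

section ConsumptionCoeff

variable {ε s τ : ℝ}

theorem mul_one_add_one_sub_mul_pos (hε : 0 ≤ ε) (hs0 : 0 < s) (hs1 : s ≤ 1) :
    0 < s * (1 + (1 - s) * ε) := by
  have : 0 ≤ (1 - s) * ε := mul_nonneg (by linarith) hε
  positivity

theorem deriv_deriv_consumptionCoeff (hε : 1 + ε ≠ 0) (hτ : s * τ < 1) :
    deriv (deriv (consumptionCoeff ε s)) τ =
      ε * s * (1 - s * τ) ^ (ε - 2) * ((2 - s) - s * (1 + (1 - s) * ε) * τ) := by
  have hderiv : deriv (consumptionCoeff ε s) =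
      fun t => deriv (fun t => (1 - s * t) ^ ε * (1 - t * (1 + ε * (1 - s)))) t / (1 + ε) :=
    funext fun _ => deriv_div_const _
  rw [hderiv, deriv_div_const, deriv_deriv_one_sub_mul_rpow_mul hτ]
  field_simp
  ring

theorem zero_lt_deriv_deriv_consumptionCoeff_iff (hε : 0 < ε) (hs0 : 0 < s) (hs1 : s ≤ 1)
    (hτ : s * τ < 1) :
    0 < deriv (deriv (consumptionCoeff ε s)) τ ↔ τ < (2 - s) / (s * (1 + (1 - s) * ε)) := by
  have hprefactor : 0 < ε * s * (1 - s * τ) ^ (ε - 2) := by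
    have : 0 < 1 - s * τ := by linarith
    positivity
  have hslope := mul_one_add_one_sub_mul_pos hε.le hs0 hs1
  rw [deriv_deriv_consumptionCoeff (by linarith) hτ, mul_pos_iff_of_pos_left hprefactor,
    lt_div_iff₀ hslope, sub_pos, mul_comm τ]

theorem one_div_mul_one_add_lt_two_sub_div (hε : 0 < ε) (hs0 : 0 < s) (hs1 : s ≤ 1) :
    1 / (s * (1 + ε)) < (2 - s) / (s * (1 + (1 - s) * ε)) := by
  have hslope := mul_one_add_one_sub_mul_pos hε.le hs0 hs1
  rw [div_lt_div_iff₀ (by positivity) hslope]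
  nlinarith

end ConsumptionCoeff

/-- For `A(τ) = (1-sτ)^ε·(1-τ(1+ε(1-s)))/(1+ε)` with `ε > 0`,
`s ∈ (0,1]`: on the domain `0 ≤ τ`, `sτ < 1`, `A''(τ) > 0` iff
`τ < (2-s)/(s(1+(1-s)ε))`; moreover `1/(s(1+ε)) < (2-s)/(s(1+(1-s)ε))`, so `A'' > 0`
at every revenue-efficient tax rate `τ ≤ 1/(s(1+ε))`. -/
theorem stmt15 (ε s : ℝ) (hε : 0 < ε) (hs0 : 0 < s) (hs1 : s ≤ 1)
    (A : ℝ → ℝ)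
    (hA : ∀ τ, A τ = (1 - s * τ) ^ ε * (1 - τ * (1 + ε * (1 - s))) / (1 + ε)) :
    (∀ τ : ℝ, 0 ≤ τ → s * τ < 1 →
      (0 < deriv (deriv A) τ ↔ τ < (2 - s) / (s * (1 + (1 - s) * ε)))) ∧
    1 / (s * (1 + ε)) < (2 - s) / (s * (1 + (1 - s) * ε)) ∧
    (∀ τ : ℝ, 0 ≤ τ → τ ≤ 1 / (s * (1 + ε)) → 0 < deriv (deriv A) τ) := by
  obtain rfl : A = consumptionCoeff ε s := funext hA
  refine ⟨fun τ _ hτ => zero_lt_deriv_deriv_consumptionCoeff_iff hε hs0 hs1 hτ,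
    one_div_mul_one_add_lt_two_sub_div hε hs0 hs1, fun τ hτ0 hτ => ?_⟩
  have hτ_dom : s * τ < 1 := by
    rw [le_div_iff₀ (by positivity)] at hτ
    nlinarith [mul_nonneg (mul_nonneg hs0.le hτ0) hε.le]
  exact (zero_lt_deriv_deriv_consumptionCoeff_iff hε hs0 hs1 hτ_dom).2
    (hτ.trans_lt (one_div_mul_one_add_lt_two_sub_div hε hs0 hs1))
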